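/- arXiv:1908.10418 — 5 statements merged into one kernel-verified Lean document; each statement's English description precedes it below -/
import Mathlib

section
/- For M ∈ ℂ with Re M > 0, the kernel K₁(z,t;M) = 4^{−M} e^{−Mt} ((e^t+1)² − z²)^{−1/2+M} F(1/2 − M, 1/2 − M; 1; ((e^t−1)² − z²)/((e^t+1)² − z²)) satisfies: for every a > −1 there is a constant C(M,a) such that ∫₀^{e^t − 1} r^a |K₁(r,t;M)| dr ≤ C(M,a) e^{−(Re M)t} (e^t − 1)^{a+1} (e^t + 1)^{2 Re M − 1} for all t > 0. -/
/-!
The coefficients of `₂F₁(b, b; 1; z)` satisfy `|c_{n+1}| / |c_n| = |b + n|² / (n + 1)²`, so for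
`Re b < 1/2` Raabe's test makes `∑ |c_n|` converge and `₂F₁(b, b; 1; ·)` is bounded on the closed
unit disc; here `b = 1/2 - M`. With `A = e^t - 1`, `B = e^t + 1` and `0 ≤ r < A`, the remaining
factor `(B² - r²)^(Re M - 1/2)` is at most `B^(2 Re M - 1)`, times `(1 - r/A)^(Re M - 1/2)` when
`Re M < 1/2` (as `B² - r² ≥ B² (1 - r/A)`). The substitution `r = A u` turns the integral of
`r^a (1 - r/A)^s` into `A^(a+1)` times a convergent Beta integral.
-/

open Real

/-- Gauss hypergeometric function ₂F₁ (complex version), as a power series. -/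
noncomputable def hypC (a b c z : ℂ) : ℂ :=
  ∑' n : ℕ, (∏ k ∈ Finset.range n, ((a + k) * (b + k) / ((c + k) * (k + 1)))) * z ^ n

/-- The kernel K₁(z,t;M). -/
noncomputable def K₁ (z t : ℝ) (M : ℂ) : ℂ :=
  (4 : ℂ) ^ (-M) * Complex.exp (-M * t) *
    (((Real.exp t + 1) ^ 2 - z ^ 2 : ℝ) : ℂ) ^ (-(1/2 : ℂ) + M) *
    hypC (1/2 - M) (1/2 - M) 1
      ((((Real.exp t - 1) ^ 2 - z ^ 2) / ((Real.exp t + 1) ^ 2 - z ^ 2) : ℝ) : ℂ)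

open MeasureTheory Set Filter

lemma summable_of_raabe {u : ℕ → ℝ} (hu : ∀ n, 0 ≤ u n) {ε : ℝ} (hε : 0 < ε)
    (h : ∀ᶠ n : ℕ in atTop, ((n : ℝ) + 1) * u (n + 1) ≤ (n - ε) * u n) : Summable u := by
  obtain ⟨N, hN⟩ := eventually_atTop.1 h
  have telescope : ∀ k : ℕ,
      ε * ∑ i ∈ Finset.range k, u (i + N) ≤ N * u N - ((k + N : ℕ) : ℝ) * u (k + N) := by
    intro k
    induction k with
    | zero => simp
    | succ k ih =>
      have step := hN (k + N) (Nat.le_add_left N k)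
      rw [Finset.sum_range_succ, Nat.add_right_comm]
      push_cast at step ih ⊢
      linarith
  rw [← summable_nat_add_iff N]
  refine summable_of_sum_range_le (c := N * u N / ε) (fun n => hu _) fun k => ?_
  rw [le_div_iff₀ hε, mul_comm]
  nlinarith [telescope k, hu (k + N), (k + N).cast_nonneg (α := ℝ)]

noncomputable def hypCoef (b : ℂ) (n : ℕ) : ℂ :=
  ∏ k ∈ Finset.range n, ((b + k) * (b + k) / ((1 + k) * (k + 1)))

lemma norm_hypCoef_succ (b : ℂ) (n : ℕ) :
    ‖hypCoef b (n + 1)‖ = ‖hypCoef b n‖ * ‖b + n‖ ^ 2 / ((n : ℝ) + 1) ^ 2 := by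
  have h : ‖(n : ℂ) + 1‖ = (n : ℝ) + 1 := by norm_cast
  rw [hypCoef, Finset.prod_range_succ, norm_mul, norm_div, norm_mul, norm_mul, add_comm 1, h,
    ← hypCoef]
  ring

lemma summable_norm_hypCoef {b : ℂ} (hb : b.re < 1 / 2) :
    Summable fun n => ‖hypCoef b n‖ := by
  set ε := 1 / 2 - b.re
  have hε : 0 < ε := by simp only [ε]; linarith
  refine summable_of_raabe (fun n => norm_nonneg _) hε ?_
  filter_upwards [eventually_ge_atTop ⌈(‖b‖ ^ 2 + ε) / ε⌉₊] with n hn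
  have hn' : ‖b‖ ^ 2 + ε ≤ n * ε := by
    rw [← div_le_iff₀ hε]; exact (Nat.le_ceil _).trans (by exact_mod_cast hn)
  have key : ‖b + n‖ ^ 2 ≤ ((n : ℝ) + 1) * (n - ε) := by
    rw [Complex.sq_norm, Complex.normSq_apply] at hn' ⊢
    simp only [Complex.add_re, Complex.natCast_re, Complex.add_im, Complex.natCast_im, ε] at hn' ⊢
    nlinarith
  calc ((n : ℝ) + 1) * ‖hypCoef b (n + 1)‖ = ‖hypCoef b n‖ * ‖b + n‖ ^ 2 / (n + 1) := by
        rw [norm_hypCoef_succ]; field_simp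
    _ ≤ ‖hypCoef b n‖ * ((n + 1) * (n - ε)) / (n + 1) := by gcongr
    _ = (n - ε) * ‖hypCoef b n‖ := by field_simp

lemma norm_hypC_le {b z : ℂ} (hb : b.re < 1 / 2) (hz : ‖z‖ ≤ 1) :
    ‖hypC b b 1 z‖ ≤ ∑' n, ‖hypCoef b n‖ :=
  tsum_of_norm_bounded (summable_norm_hypCoef hb).hasSum fun n => by
    rw [norm_mul, norm_pow]
    exact mul_le_of_le_one_right (norm_nonneg _) (pow_le_one₀ (norm_nonneg _) hz)

lemma rpow_sq_sub_sq_le {A B r : ℝ} (p : ℝ) (hr : 0 ≤ r) (hrA : r < A) (hAB : A ≤ B) :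
    (B ^ 2 - r ^ 2) ^ p ≤ B ^ (2 * p) * (1 - r / A) ^ min p 0 := by
  have hA : 0 < A := hr.trans_lt hrA
  have hB : 0 < B := hA.trans_le hAB
  have hsq : (B ^ 2) ^ p = B ^ (2 * p) := by
    rw [← Real.rpow_natCast, ← Real.rpow_mul hB.le, Nat.cast_ofNat]
  rcases le_total 0 p with hp | hp
  · rw [min_eq_right hp, Real.rpow_zero, mul_one, ← hsq]
    exact Real.rpow_le_rpow (by nlinarith) (by nlinarith) hp
  · have hq : 0 < 1 - r / A := by rw [sub_pos, div_lt_one hA]; exact hrA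
    have hlow : B ^ 2 * (1 - r / A) ≤ B ^ 2 - r ^ 2 := by
      have : r ^ 2 ≤ B ^ 2 * (r / A) := by
        rw [mul_div_assoc', le_div_iff₀ hA]
        nlinarith [mul_le_mul_of_nonneg_left hrA.le (mul_nonneg hr hA.le),
          mul_le_mul_of_nonneg_left (mul_le_mul hAB hAB hA.le hB.le) hr]
      linarith
    rw [min_eq_left hp, ← hsq, ← Real.mul_rpow (by positivity) hq.le]
    exact Real.rpow_le_rpow_of_nonpos (by positivity) hlow hp

lemma intervalIntegrable_rpow_mul_one_sub_rpow {a s : ℝ} (ha : -1 < a) (hs : -1 < s) :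
    IntervalIntegrable (fun u : ℝ => u ^ a * (1 - u) ^ s) volume 0 1 := by
  have hbeta := (Complex.betaIntegral_convergent (u := a + 1) (v := s + 1)
    (by simp only [Complex.add_re, Complex.ofReal_re, Complex.one_re]; linarith)
    (by simp only [Complex.add_re, Complex.ofReal_re, Complex.one_re]; linarith)).norm
  refine hbeta.congr_uIoo fun u hu => ?_
  rw [uIoo_of_le zero_le_one] at hu
  have h1 : (0:ℝ) < 1 - u := by linarith [hu.2]
  simp only [norm_mul, add_sub_cancel_right]
  rw [← Complex.ofReal_one, ← Complex.ofReal_sub, Complex.norm_cpow_eq_rpow_re_of_pos hu.1,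
    Complex.norm_cpow_eq_rpow_re_of_pos h1]
  simp

lemma intervalIntegrable_rpow_mul_one_sub_div_rpow {a s A : ℝ} (ha : -1 < a) (hs : -1 < s)
    (hA : 0 < A) :
    IntervalIntegrable (fun r : ℝ => r ^ a * (1 - r / A) ^ s) volume 0 A := by
  have h := ((intervalIntegrable_rpow_mul_one_sub_rpow ha hs).comp_mul_left (c := A⁻¹)).const_mul
    (A ^ a)
  simp only [div_inv_eq_mul, zero_mul, one_mul] at h
  refine h.congr_uIoo fun r hr => ?_
  rw [uIoo_of_le hA.le] at hr
  dsimp only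
  rw [Real.mul_rpow (by positivity) hr.1.le, Real.inv_rpow hA.le, inv_mul_eq_div,
    div_eq_inv_mul r A]
  field_simp

lemma integral_rpow_mul_one_sub_div_rpow (a s : ℝ) {A : ℝ} (hA : 0 < A) :
    ∫ r in (0:ℝ)..A, r ^ a * (1 - r / A) ^ s =
      A ^ (a + 1) * ∫ u in (0:ℝ)..1, u ^ a * (1 - u) ^ s := by
  calc ∫ r in (0:ℝ)..A, r ^ a * (1 - r / A) ^ s
      = ∫ r in (0:ℝ)..A, A ^ a * ((r / A) ^ a * (1 - r / A) ^ s) := by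
        refine intervalIntegral.integral_congr fun r hr => ?_
        rw [uIcc_of_le hA.le] at hr
        rw [Real.div_rpow hr.1 hA.le]
        field_simp
    _ = A * ∫ u in (0:ℝ)..1, A ^ a * (u ^ a * (1 - u) ^ s) := by
        rw [intervalIntegral.integral_comp_div (fun u => A ^ a * (u ^ a * (1 - u) ^ s)) hA.ne',
          zero_div, div_self hA.ne', smul_eq_mul]
    _ = _ := by
        rw [intervalIntegral.integral_const_mul, Real.rpow_add hA, Real.rpow_one]
        ring

lemma norm_K₁ (M : ℂ) {r t : ℝ} (hr : r ^ 2 < (exp t + 1) ^ 2) :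
    ‖K₁ r t M‖ = ‖(4 : ℂ) ^ (-M)‖ * exp (-M.re * t) * ((exp t + 1) ^ 2 - r ^ 2) ^ (M.re - 1 / 2) *
      ‖hypC (1/2 - M) (1/2 - M) 1 (((exp t - 1) ^ 2 - r ^ 2) / ((exp t + 1) ^ 2 - r ^ 2) : ℝ)‖ := by
  rw [K₁, norm_mul, norm_mul, norm_mul, Complex.norm_exp,
    Complex.norm_cpow_eq_rpow_re_of_pos (sub_pos.2 hr)]
  simp [sub_eq_neg_add]

lemma norm_K₁_le {M : ℂ} (hM : 0 < M.re) {r t : ℝ} (hr : 0 ≤ r) (hrA : r < exp t - 1) :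
    ‖K₁ r t M‖ ≤ ‖(4 : ℂ) ^ (-M)‖ * (∑' n, ‖hypCoef (1/2 - M) n‖) * exp (-M.re * t) *
      (exp t + 1) ^ (2 * M.re - 1) * (1 - r / (exp t - 1)) ^ min (M.re - 1/2) 0 := by
  have hB : r ^ 2 < (exp t + 1) ^ 2 := by nlinarith
  have hz : ‖((((exp t - 1) ^ 2 - r ^ 2) / ((exp t + 1) ^ 2 - r ^ 2) : ℝ) : ℂ)‖ ≤ 1 := by
    rw [Complex.norm_real, Real.norm_eq_abs, abs_le]
    constructor
    · exact (neg_nonpos.2 zero_le_one).trans (div_nonneg (by nlinarith) (by nlinarith))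
    · exact div_le_one_of_le₀ (by nlinarith) (by nlinarith)
  have hF := norm_hypC_le (b := 1/2 - M) (by simpa using hM) hz
  have hP := rpow_sq_sub_sq_le (B := exp t + 1) (M.re - 1/2) hr hrA (by linarith)
  rw [show 2 * (M.re - 1/2) = 2 * M.re - 1 by ring] at hP
  rw [norm_K₁ M hB]
  have hq : 0 ≤ (1 - r / (exp t - 1)) ^ min (M.re - 1/2) 0 :=
    Real.rpow_nonneg (by rw [sub_nonneg, div_le_one (by linarith)]; exact hrA.le) _
  calc _ ≤ ‖(4 : ℂ) ^ (-M)‖ * exp (-M.re * t) *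
        ((exp t + 1) ^ (2 * M.re - 1) * (1 - r / (exp t - 1)) ^ min (M.re - 1/2) 0) *
        ∑' n, ‖hypCoef (1/2 - M) n‖ := by gcongr
    _ = _ := by ring

theorem stmt8 (M : ℂ) (hM : 0 < M.re) (a : ℝ) (ha : a > -1) :
    ∃ C : ℝ, ∀ t : ℝ, 0 < t →
      (∫ r in (0:ℝ)..(Real.exp t - 1), r ^ a * ‖K₁ r t M‖) ≤
        C * Real.exp (-M.re * t) * (Real.exp t - 1) ^ (a + 1) *
          (Real.exp t + 1) ^ (2 * M.re - 1) := by
  set s := min (M.re - 1/2) 0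
  have hs : -1 < s := lt_min (by linarith) (by norm_num)
  refine ⟨‖(4 : ℂ) ^ (-M)‖ * (∑' n, ‖hypCoef (1/2 - M) n‖) * ∫ u in (0:ℝ)..1, u ^ a * (1 - u) ^ s,
    fun t ht => ?_⟩
  set A := exp t - 1
  have hA : 0 < A := sub_pos.2 (one_lt_exp_iff.2 ht)
  set c := ‖(4 : ℂ) ^ (-M)‖ * (∑' n, ‖hypCoef (1/2 - M) n‖) * exp (-M.re * t) *
    (exp t + 1) ^ (2 * M.re - 1)
  have hmajorant : IntegrableOn (fun r => c * (r ^ a * (1 - r / A) ^ s)) (Ioo 0 A) :=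
    ((intervalIntegrable_rpow_mul_one_sub_div_rpow ha hs hA).const_mul c).1.mono_set
      Ioo_subset_Ioc_self
  calc ∫ r in (0:ℝ)..A, r ^ a * ‖K₁ r t M‖
      = ∫ r in Ioo 0 A, r ^ a * ‖K₁ r t M‖ := by
        rw [intervalIntegral.integral_of_le hA.le, integral_Ioc_eq_integral_Ioo]
    _ ≤ ∫ r in Ioo 0 A, c * (r ^ a * (1 - r / A) ^ s) := by
        refine integral_mono_of_nonneg ?_ hmajorant ?_ <;>
          filter_upwards [ae_restrict_mem measurableSet_Ioo] with r hr
        · exact mul_nonneg (rpow_nonneg hr.1.le a) (norm_nonneg _)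
        · exact (mul_le_mul_of_nonneg_left (norm_K₁_le hM hr.1.le hr.2)
            (rpow_nonneg hr.1.le a)).trans_eq (by ring)
    _ = c * ∫ r in (0:ℝ)..A, r ^ a * (1 - r / A) ^ s := by
        rw [integral_const_mul, intervalIntegral.integral_of_le hA.le, integral_Ioc_eq_integral_Ioo]
    _ = _ := by
        rw [integral_rpow_mul_one_sub_div_rpow a s hA]
        ring
end

section
/- Let a > −1 and 0 < M < 1/2. Then lim_{z→∞} z^{M − 1/2} F((a+1)/2, 3/2 − M; (a+3)/2; ((z−1)/(z+1))²) = 2^{2M−1} (1+a)/(1 − 2M). -/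
open Real Filter

/-- Gauss hypergeometric function ₂F₁ (real version), as a power series. -/
noncomputable def hypR (a b c x : ℝ) : ℝ :=
  ∑' n : ℕ, (∏ k ∈ Finset.range n, ((a + k) * (b + k) / ((c + k) * (k + 1)))) * x ^ n

/-!
Write `α = (a + 1) / 2`, `c = 1 / 2 - M` and `m_c(n) = Ring.multichoose c n = (c)_n / n!`,
so that the series is `F(x) = ∑ α / (α + n) * m_{c+1}(n) * x ^ n`.
Since `c * m_{c+1}(n) = (c + n) * m_c(n)`, the binomial series gives
`F(x) = α / c * ((1 - x) ^ (-c) + (c - α) * ∑ m_c(n) / (α + n) * x ^ n)`.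
The remaining series has nonnegative coefficients whose sum converges, because
`(1 - c) * m_c(n) / (n + 1) = m_c(n) - m_c(n + 1)` telescopes; hence it stays bounded as `x → 1⁻`
and `(1 - x) ^ c * F(x) → α / c`. Finally `ζ = ((z - 1) / (z + 1)) ^ 2` tends to `1` from below and
`z ^ (M - 1 / 2) = (2 * z / (z + 1)) ^ (2 * M - 1) * (1 - ζ) ^ c`.
-/

open Topology Finset

section Multichoose

variable {K : Type*} [Field K] [CharZero K]

lemma Ring.multichoose_succ_right (b : K) (n : ℕ) :
    Ring.multichoose b (n + 1) = Ring.multichoose b n * ((b + n) / (n + 1)) := by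
  have h (m : ℕ) : (m.factorial : K) * Ring.multichoose b m = (ascPochhammer K m).eval b := by
    rw [← nsmul_eq_mul, Ring.factorial_nsmul_multichoose_eq_ascPochhammer,
      Polynomial.ascPochhammer_smeval_eq_eval]
  have hrec := h (n + 1)
  rw [ascPochhammer_succ_eval, ← h n, Nat.factorial_succ] at hrec
  rw [mul_div_assoc', eq_div_iff (mod_cast n.succ_ne_zero)]
  apply mul_left_cancel₀ (Nat.cast_ne_zero.2 n.factorial_ne_zero : (n.factorial : K) ≠ 0)
  push_cast at hrec
  linear_combination hrec

lemma prod_range_add_div_eq_multichoose (b : K) (n : ℕ) :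
    ∏ k ∈ range n, (b + k) / (k + 1) = Ring.multichoose b n := by
  induction n with
  | zero => simp
  | succ n ih => rw [prod_range_succ, ih, Ring.multichoose_succ_right]

lemma Ring.mul_multichoose_add_one_left (c : K) (n : ℕ) :
    c * Ring.multichoose (c + 1) n = (c + n) * Ring.multichoose c n := by
  induction n with
  | zero => simp
  | succ n ih =>
    rw [Ring.multichoose_succ_right, Ring.multichoose_succ_right, ← mul_assoc, ih]
    push_cast
    field_simp
    ring

lemma Ring.multichoose_sub_multichoose_succ (c : K) (n : ℕ) :
    Ring.multichoose c n - Ring.multichoose c (n + 1) =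
      (1 - c) * (Ring.multichoose c n / (n + 1)) := by
  rw [Ring.multichoose_succ_right]
  field_simp
  ring

end Multichoose

lemma Ring.multichoose_nonneg {b : ℝ} (hb : 0 ≤ b) (n : ℕ) : 0 ≤ Ring.multichoose b n := by
  rw [← prod_range_add_div_eq_multichoose]
  exact prod_nonneg fun k _ ↦ by positivity

lemma hasSum_multichoose_mul_pow (b : ℝ) {x : ℝ} (hx : |x| < 1) :
    HasSum (fun n ↦ Ring.multichoose b n * x ^ n) ((1 - x) ^ (-b)) := by
  have := (Real.one_div_one_sub_rpow_hasFPowerSeriesOnBall_zero b).hasSum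
    (y := x) (by simpa [enorm_eq_nnnorm, ← NNReal.coe_lt_coe] using hx)
  simpa [FormalMultilinearSeries.ofScalars_apply_eq, Ring.multichoose_eq, mul_comm,
    Real.rpow_neg (sub_nonneg.2 (abs_lt.1 hx).2.le)] using this

lemma summable_multichoose_div_add {c α : ℝ} (hc0 : 0 ≤ c) (hc1 : c < 1) (hα : 0 < α) :
    Summable fun n : ℕ ↦ Ring.multichoose c n / (α + n) := by
  have hsucc : Summable fun n : ℕ ↦ Ring.multichoose c n / (n + 1) := by
    refine summable_of_sum_range_le (c := 1 / (1 - c))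
      (fun n ↦ div_nonneg (Ring.multichoose_nonneg hc0 n) (by positivity)) fun N ↦ ?_
    have htel := sum_range_sub' (fun n ↦ Ring.multichoose c n) N
    simp only [Ring.multichoose_sub_multichoose_succ, ← mul_sum,
      Ring.multichoose_zero_right] at htel
    rw [le_div_iff₀ (by linarith), mul_comm, htel]
    linarith [Ring.multichoose_nonneg hc0 N]
  refine (hsucc.mul_left (1 + α⁻¹)).of_nonneg_of_le
    (fun n ↦ div_nonneg (Ring.multichoose_nonneg hc0 n) (by positivity)) fun n ↦ ?_
  have hm := Ring.multichoose_nonneg hc0 n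
  have hn : (n : ℝ) + 1 ≤ (1 + α⁻¹) * (α + n) := by
    rw [add_mul, one_mul, inv_mul_eq_div, add_div, div_self hα.ne']
    linarith [div_nonneg n.cast_nonneg hα.le]
  rw [mul_div_assoc', div_le_div_iff₀ (by positivity) (by positivity),
    mul_comm (1 + α⁻¹), mul_assoc]
  exact mul_le_mul_of_nonneg_left hn hm

lemma summable_multichoose_div_add_mul_pow {c α x : ℝ} (hc0 : 0 ≤ c) (hc1 : c < 1) (hα : 0 < α)
    (hx0 : 0 ≤ x) (hx1 : x ≤ 1) :
    Summable fun n : ℕ ↦ Ring.multichoose c n / (α + n) * x ^ n :=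
  (summable_multichoose_div_add hc0 hc1 hα).of_nonneg_of_le
    (fun n ↦ mul_nonneg (div_nonneg (Ring.multichoose_nonneg hc0 n) (by positivity))
      (pow_nonneg hx0 n))
    fun n ↦ mul_le_of_le_one_right
      (div_nonneg (Ring.multichoose_nonneg hc0 n) (by positivity)) (pow_le_one₀ hx0 hx1)

lemma prod_range_add_div_add_one {α : ℝ} (hα : 0 < α) (n : ℕ) :
    ∏ k ∈ range n, (α + k) / (α + 1 + k) = α / (α + n) := by
  induction n with
  | zero => simp [hα.ne']
  | succ n ih =>
    rw [prod_range_succ, ih]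
    push_cast
    field_simp
    ring

lemma hypR_add_one_eq_tsum {α : ℝ} (hα : 0 < α) (b x : ℝ) :
    hypR α b (α + 1) x = ∑' n : ℕ, α / (α + n) * Ring.multichoose b n * x ^ n := by
  simp only [hypR, mul_div_mul_comm, prod_mul_distrib, prod_range_add_div_add_one hα,
    prod_range_add_div_eq_multichoose]

lemma hypR_add_one_eq_one_sub_rpow_add_tsum {α c x : ℝ} (hα : 0 < α) (hc0 : 0 < c) (hc1 : c < 1)
    (hx0 : 0 ≤ x) (hx1 : x < 1) :
    hypR α (c + 1) (α + 1) x =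
      α / c * ((1 - x) ^ (-c) + (c - α) * ∑' n : ℕ, Ring.multichoose c n / (α + n) * x ^ n) := by
  have hR := summable_multichoose_div_add_mul_pow hc0.le hc1 hα hx0 hx1.le
  have hsum := ((hasSum_multichoose_mul_pow c (abs_lt.2 ⟨by linarith, hx1⟩)).add
    (hR.hasSum.mul_left (c - α))).mul_left (α / c)
  rw [hypR_add_one_eq_tsum hα, ← hsum.tsum_eq]
  refine tsum_congr fun n ↦ ?_
  have hαn : 0 < α + n := by positivity
  calc α / (α + n) * Ring.multichoose (c + 1) n * x ^ n
      = α / (c * (α + n)) * (c * Ring.multichoose (c + 1) n) * x ^ n := by field_simp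
    _ = _ := by rw [Ring.mul_multichoose_add_one_left]; field_simp; ring

theorem tendsto_one_sub_rpow_mul_hypR {α c : ℝ} (hα : 0 < α) (hc0 : 0 < c) (hc1 : c < 1) :
    Tendsto (fun x ↦ (1 - x) ^ c * hypR α (c + 1) (α + 1) x) (𝓝[<] 1) (𝓝 (α / c)) := by
  set R : ℝ → ℝ := fun x ↦ ∑' n : ℕ, Ring.multichoose c n / (α + n) * x ^ n
  have hR_bdd : ∀ x ∈ Set.Icc (0 : ℝ) 1, ‖R x‖ ≤ R 1 := fun x ⟨hx0, hx1⟩ ↦ by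
    have hterm (n : ℕ) : 0 ≤ Ring.multichoose c n / (α + n) :=
      div_nonneg (Ring.multichoose_nonneg hc0.le n) (by positivity)
    rw [Real.norm_of_nonneg (tsum_nonneg fun n ↦ mul_nonneg (hterm n) (pow_nonneg hx0 n))]
    exact (summable_multichoose_div_add_mul_pow hc0.le hc1 hα hx0 hx1).tsum_le_tsum
      (fun n ↦ by simpa using mul_le_mul_of_nonneg_left (pow_le_one₀ hx0 hx1) (hterm n))
      (summable_multichoose_div_add_mul_pow hc0.le hc1 hα zero_le_one le_rfl)
  have hvanish : Tendsto (fun x ↦ (1 - x) ^ c * R x) (𝓝[<] 1) (𝓝 0) := by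
    have hpow : Tendsto (fun x : ℝ ↦ (1 - x) ^ c) (𝓝[<] 1) (𝓝 0) := by
      have := ((continuous_const.sub continuous_id).rpow_const (f := fun x : ℝ ↦ 1 - x)
        fun _ ↦ Or.inr hc0.le).tendsto 1
      simpa [Real.zero_rpow hc0.ne'] using this.mono_left nhdsWithin_le_nhds
    refine hpow.zero_mul_isBoundedUnder_le ⟨R 1, eventually_map.2 ?_⟩
    filter_upwards [Ioo_mem_nhdsLT zero_lt_one] with x hx
    exact hR_bdd x (Set.Ioo_subset_Icc_self hx)
  have hlim := ((hvanish.const_mul (c - α)).const_add 1).const_mul (α / c)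
  rw [mul_zero, add_zero, mul_one] at hlim
  refine hlim.congr' ?_
  filter_upwards [Ioo_mem_nhdsLT zero_lt_one] with x ⟨hx0, hx1⟩
  have h1x : 0 < 1 - x := by linarith
  have hpow : (1 - x) ^ c ≠ 0 := (Real.rpow_pos_of_pos h1x c).ne'
  rw [hypR_add_one_eq_one_sub_rpow_add_tsum hα hc0 hc1 hx0.le hx1, Real.rpow_neg h1x.le]
  linear_combination (-(α / c)) * mul_inv_cancel₀ hpow

lemma tendsto_mul_add_div_add_one_atTop (p q : ℝ) :
    Tendsto (fun z : ℝ ↦ (p * z + q) / (z + 1)) atTop (𝓝 p) := by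
  have h : Tendsto (fun z : ℝ ↦ p + (q - p) / (z + 1)) atTop (𝓝 (p + 0)) :=
    tendsto_const_nhds.add <| tendsto_const_nhds.div_atTop <|
      tendsto_atTop_add_const_right _ 1 tendsto_id
  rw [add_zero] at h
  refine h.congr' ?_
  filter_upwards [eventually_gt_atTop 0] with z hz
  field_simp
  ring

lemma tendsto_sub_one_div_add_one_sq_atTop :
    Tendsto (fun z : ℝ ↦ ((z - 1) / (z + 1)) ^ 2) atTop (𝓝[<] 1) := by
  refine tendsto_nhdsWithin_iff.2 ⟨?_, ?_⟩
  · simpa [← sub_eq_add_neg] using (tendsto_mul_add_div_add_one_atTop 1 (-1)).pow 2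
  · filter_upwards [eventually_gt_atTop 0] with z hz
    rw [Set.mem_Iio, sq_lt_one_iff_abs_lt_one, abs_lt, lt_div_iff₀ (by linarith),
      div_lt_one (by linarith)]
    constructor <;> linarith

lemma rpow_neg_eq_mul_one_sub_sq_rpow {z : ℝ} (hz : 0 < z) (p : ℝ) :
    z ^ (-p) = (2 * z / (z + 1)) ^ (-2 * p) * (1 - ((z - 1) / (z + 1)) ^ 2) ^ p := by
  have hu : 0 < 2 * z / (z + 1) := by positivity
  have h1 : 1 - ((z - 1) / (z + 1)) ^ 2 = (2 * z / (z + 1)) ^ (2 : ℝ) / z := by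
    rw [Real.rpow_two]; field_simp; ring
  rw [h1, Real.div_rpow (by positivity) hz.le, ← Real.rpow_mul hu.le, mul_div_assoc',
    ← Real.rpow_add hu, Real.rpow_neg hz.le]
  ring_nf
  rw [Real.rpow_zero, mul_one]

theorem stmt11 (a M : ℝ) (ha : a > -1) (hM0 : 0 < M) (hM : M < 1/2) :
    Tendsto (fun z : ℝ => z ^ (M - 1/2) *
        hypR ((a + 1) / 2) (3/2 - M) ((a + 3) / 2) (((z - 1) / (z + 1)) ^ 2))
      atTop (nhds ((2 : ℝ) ^ (2 * M - 1) * (1 + a) / (1 - 2 * M))) := by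
  have hα : 0 < (a + 1) / 2 := by linarith
  have hlim := (tendsto_one_sub_rpow_mul_hypR hα (c := 1 / 2 - M) (by linarith) (by linarith)).comp
    tendsto_sub_one_div_add_one_sq_atTop
  have hfac : Tendsto (fun z : ℝ ↦ (2 * z / (z + 1)) ^ (2 * M - 1)) atTop (𝓝 (2 ^ (2 * M - 1))) :=
    ((Real.continuousAt_rpow_const 2 _ (Or.inl two_ne_zero)).tendsto).comp
      (by simpa using tendsto_mul_add_div_add_one_atTop 2 0)
  have hval : (2 : ℝ) ^ (2 * M - 1) * ((a + 1) / 2 / (1 / 2 - M)) =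
      2 ^ (2 * M - 1) * (1 + a) / (1 - 2 * M) := by
    field_simp
    ring
  rw [← hval]
  refine (hfac.mul hlim).congr' ?_
  filter_upwards [eventually_gt_atTop 0] with z hz
  rw [show M - 1 / 2 = -(1 / 2 - M) by ring, rpow_neg_eq_mul_one_sub_sq_rpow hz,
    show -2 * (1 / 2 - M) = 2 * M - 1 by ring, show 3 / 2 - M = 1 / 2 - M + 1 by ring,
    show (a + 3) / 2 = (a + 1) / 2 + 1 by ring, mul_assoc]
  rfl
end

section
/- Let a > −1. Then lim_{z→∞} (1/ln z) F((a+1)/2, 1; (a+3)/2; ((z−1)/(z+1))²) = (1+a)/2. -/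
open Real Filter

lemma aux_prod (α : ℝ) (hα : 0 < α) (n : ℕ) :
    ∏ k ∈ Finset.range n, ((α + k) * (1 + k) / ((α + 1 + k) * (k + 1))) = α / (α + n) := by
  induction n with
  | zero => simp [div_self hα.ne']
  | succ n ih =>
    rw [Finset.prod_range_succ, ih]
    have h1 : α + (n : ℝ) ≠ 0 := by positivity
    have h2 : α + 1 + (n : ℝ) ≠ 0 := by positivity
    have h3 : (n : ℝ) + 1 ≠ 0 := by positivity
    push_cast
    field_simp
    ring

lemma aux_summable (α : ℝ) (hα : 0 < α) (x : ℝ) (hx0 : 0 ≤ x) (hx1 : x < 1) :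
    Summable (fun n : ℕ => x ^ n / (α + n)) := by
  refine Summable.of_nonneg_of_le (fun n => by positivity) (fun n => ?_)
    ((summable_geometric_of_lt_one hx0 hx1).mul_right α⁻¹)
  rw [div_eq_mul_inv]
  refine mul_le_mul_of_nonneg_left ?_ (pow_nonneg hx0 n)
  rw [← one_div α, ← one_div (α + (n:ℝ))]
  exact one_div_le_one_div_of_le hα (le_add_of_nonneg_right (Nat.cast_nonneg n))

lemma aux_bound (α : ℝ) (hα : 0 < α) : ∃ C : ℝ, ∀ x : ℝ, 0 ≤ x → x < 1 →
    |(∑' n : ℕ, x ^ n / (α + n)) + Real.log (1 - x)| ≤ C := by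
  have hsum2 : Summable (fun n : ℕ => α / ((n : ℝ) + 1) ^ 2) := by
    have h := (summable_nat_add_iff 1).mpr (summable_one_div_nat_pow.mpr one_lt_two)
    have := h.mul_left α
    refine this.congr fun n => ?_
    push_cast
    ring
  refine ⟨α⁻¹ + ∑' n : ℕ, α / ((n : ℝ) + 1) ^ 2, fun x hx0 hx1 => ?_⟩
  have hx' : |x| < 1 := by rw [abs_of_nonneg hx0]; exact hx1
  set f : ℕ → ℝ := fun n => x ^ n / (α + n) with hf
  have hS : HasSum f (∑' n, f n) := (aux_summable α hα x hx0 hx1).hasSum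
  have hS1 : HasSum (fun n : ℕ => f (n + 1)) ((∑' n, f n) - f 0) := by
    rw [hasSum_nat_add_iff 1]
    simpa using hS
  have hlog := hasSum_pow_div_log_of_abs_lt_one hx'
  have hD := hS1.sub hlog
  have habs : ∀ n : ℕ, |f (n + 1) - x ^ (n + 1) / (n + 1)| ≤ α / ((n : ℝ) + 1) ^ 2 := by
    intro n
    have hn1 : (0:ℝ) < (n : ℝ) + 1 := by positivity
    have hd : (0:ℝ) < α + ((n:ℝ) + 1) := by positivity
    have hpos : 0 < α / (((n:ℝ) + 1) * (α + ((n:ℝ) + 1))) := by positivity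
    have e : f (n + 1) - x ^ (n + 1) / (↑n + 1) =
        x ^ (n + 1) * (-(α / (((n:ℝ) + 1) * (α + ((n:ℝ) + 1))))) := by
      simp only [hf]
      push_cast
      field_simp
      ring
    rw [e, abs_mul, abs_neg, abs_pow, abs_of_pos hpos]
    have h1 : |x| ^ (n+1) ≤ 1 := pow_le_one₀ (abs_nonneg x) hx'.le
    have h2 : α / (((n:ℝ) + 1) * (α + ((n:ℝ) + 1))) ≤ α / ((n : ℝ) + 1) ^ 2 := by
      apply div_le_div_of_nonneg_left hα.le (by positivity)
      nlinarith
    nlinarith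
  have hsa : Summable (fun n : ℕ => |f (n + 1) - x ^ (n + 1) / (n + 1)|) :=
    Summable.of_nonneg_of_le (fun n => abs_nonneg _) habs hsum2
  have hb1 : |(∑' n, f n) - f 0 - (-Real.log (1 - x))| ≤ ∑' n : ℕ, α / ((n : ℝ) + 1) ^ 2 := by
    rw [← hD.tsum_eq]
    have h1 : ‖∑' n : ℕ, (f (n + 1) - x ^ (n + 1) / ((n:ℝ) + 1))‖ ≤
        ∑' n : ℕ, ‖f (n + 1) - x ^ (n + 1) / ((n:ℝ) + 1)‖ := by
      apply norm_tsum_le_tsum_norm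
      simpa only [Real.norm_eq_abs] using hsa
    simp only [Real.norm_eq_abs] at h1
    exact h1.trans (Summable.tsum_le_tsum habs hsa hsum2)
  have hf0 : f 0 = α⁻¹ := by simp [hf]
  have htri : |(∑' n, f n) + Real.log (1 - x)| ≤
      |(∑' n, f n) - f 0 - (-Real.log (1 - x))| + |f 0| := by
    have e2 : (∑' n, f n) + Real.log (1 - x) =
        ((∑' n, f n) - f 0 - (-Real.log (1 - x))) + f 0 := by ring
    rw [e2]
    exact abs_add_le _ _
  rw [hf0] at hb1 htri
  refine htri.trans ?_
  rw [abs_of_pos (inv_pos.mpr hα)]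
  linarith [hb1]
lemma aux_hyp (α : ℝ) (hα : 0 < α) (x : ℝ) :
    hypR α 1 (α + 1) x = α * ∑' n : ℕ, x ^ n / (α + n) := by
  unfold hypR
  rw [← tsum_mul_left]
  apply tsum_congr
  intro n
  have := aux_prod α hα n
  have e : ∀ k : ℕ, (α + k) * (1 + k) / ((α + 1 + k) * (k + 1))
      = (α + k) * ((1:ℝ) + k) / ((α + 1 + k) * (k + 1)) := fun k => rfl
  rw [show (∏ k ∈ Finset.range n, ((α + (k:ℝ)) * (1 + k) / ((α + 1 + k) * (k + 1)))) = α / (α + n) from this]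
  ring

theorem stmt12 (a : ℝ) (ha : a > -1) :
    Tendsto (fun z : ℝ => (1 / Real.log z) *
        hypR ((a + 1) / 2) 1 ((a + 3) / 2) (((z - 1) / (z + 1)) ^ 2))
      atTop (nhds ((1 + a) / 2)) := by
  have hα : 0 < (a + 1) / 2 := by linarith
  set α : ℝ := (a + 1) / 2 with hαd
  obtain ⟨C, hC⟩ := aux_bound α hα
  have hC0 : 0 ≤ C := le_trans (abs_nonneg _) (hC 0 le_rfl one_pos)
  have hc3 : (a + 3) / 2 = α + 1 := by rw [hαd]; ring
  have hgoal : (1 + a) / 2 = α := by rw [hαd]; ring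
  rw [hgoal, hc3]
  set r : ℝ → ℝ := fun z => 2 * (Real.log (z + 1) - Real.log z) - Real.log 4 +
      ((∑' n : ℕ, (((z - 1) / (z + 1)) ^ 2) ^ n / (α + n)) +
        Real.log (1 - ((z - 1) / (z + 1)) ^ 2)) with hr
  set K : ℝ := α * (2 * Real.log 2 + Real.log 4 + C) with hK
  -- bounds for z ≥ 2
  have hbd : ∀ z : ℝ, 2 ≤ z → |α * r z| ≤ K := by
    intro z hz
    have hz0 : (0:ℝ) < z := by linarith
    have hz1 : (1:ℝ) < z := by linarith
    have hzp : (0:ℝ) < z + 1 := by linarith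
    have hfrac0 : 0 ≤ (z - 1) / (z + 1) := div_nonneg (by linarith) hzp.le
    have hfrac : (z - 1) / (z + 1) < 1 := (div_lt_one hzp).mpr (by linarith)
    have hx0 : 0 ≤ ((z - 1) / (z + 1)) ^ 2 := by positivity
    have hx1 : ((z - 1) / (z + 1)) ^ 2 < 1 := pow_lt_one₀ hfrac0 hfrac (by norm_num)
    have hh := hC _ hx0 hx1
    have hd0 : Real.log z ≤ Real.log (z + 1) := Real.log_le_log hz0 (by linarith)
    have hd1 : Real.log (z + 1) ≤ Real.log 2 + Real.log z := by
      have h2 : Real.log (z + 1) ≤ Real.log (2 * z) :=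
        Real.log_le_log (by linarith) (by linarith)
      rwa [Real.log_mul two_ne_zero (ne_of_gt hz0)] at h2
    have hl4 : 0 ≤ Real.log 4 := Real.log_nonneg (by norm_num)
    rw [hK, abs_mul, abs_of_pos hα]
    have habs : |r z| ≤ 2 * Real.log 2 + Real.log 4 + C := by
      rw [hr]
      rw [abs_le] at hh ⊢
      constructor <;> [linarith [hh.1]; linarith [hh.2]]
    exact mul_le_mul_of_nonneg_left habs hα.le
  -- tendsto of the correction term
  have h0 : Tendsto (fun z : ℝ => (α * r z) * (1 / Real.log z)) atTop (nhds 0) := by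
    apply squeeze_zero_norm' (a := fun z => K * (1 / Real.log z))
    · filter_upwards [eventually_ge_atTop (2:ℝ)] with z hz
      have hz1 : (1:ℝ) < z := by linarith
      have hL : 0 < Real.log z := Real.log_pos hz1
      rw [norm_mul, Real.norm_eq_abs, Real.norm_eq_abs, abs_of_pos (by positivity : (0:ℝ) < 1 / Real.log z)]
      exact mul_le_mul_of_nonneg_right (hbd z hz) (by positivity)
    · have h1 : Tendsto (fun z : ℝ => (Real.log z)⁻¹) atTop (nhds 0) :=
        Real.tendsto_log_atTop.inv_tendsto_atTop
      have := h1.const_mul K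
      simpa [one_div] using this
  -- limit of the nice form
  have hg : Tendsto (fun z : ℝ => α + (α * r z) * (1 / Real.log z)) atTop (nhds α) := by
    have := tendsto_const_nhds.add h0 (f := fun _ : ℝ => α) (x := atTop)
    simpa using this
  -- eventual equality
  apply hg.congr'
  filter_upwards [eventually_ge_atTop (2:ℝ)] with z hz
  have hz0 : (0:ℝ) < z := by linarith
  have hz1 : (1:ℝ) < z := by linarith
  have hzp : (0:ℝ) < z + 1 := by linarith
  have hL : Real.log z ≠ 0 := ne_of_gt (Real.log_pos hz1)
  have h1x : 1 - ((z - 1) / (z + 1)) ^ 2 = 4 * z / (z + 1) ^ 2 := by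
    field_simp
    ring
  have hlog1x : Real.log (1 - ((z - 1) / (z + 1)) ^ 2) =
      Real.log 4 + Real.log z - 2 * Real.log (z + 1) := by
    rw [h1x, Real.log_div (by positivity) (by positivity),
      Real.log_mul (by norm_num) (ne_of_gt hz0), Real.log_pow]
    push_cast
    ring
  rw [aux_hyp α hα]
  simp only [hr]
  rw [hlog1x]
  field_simp
  ring
end

section
/- Let M ∈ ℂ with Re M > 0 and a > −1. Define K₁(z,t;M) as the kernel 4^{−M} e^{−Mt}((e^t+1)² − z²)^{−1/2+M} F(1/2−M, 1/2−M; 1; ((e^t−1)²−z²)/((e^t+1)²−z²)) for 0 ≤ z ≤ e^t − 1. Then there is C(M,a) with ∫₀¹ (φ(t)s)^a |K₁(φ(t)s, t; M)| φ(t) ds ≤ C(M,a) t^{a+1} for all t ∈ (0,1), where φ(t) = e^t − 1. -/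
open Real

/-!
On the region `0 ≤ t ≤ 1`, `0 ≤ z ≤ eᵗ - 1` the kernel is uniformly bounded: `|e^{-Mt}| ≤ e^{|Re M|}`,
the base `(eᵗ + 1)² - z²` lies in `[4, (e + 1)²]`, and the argument of the hypergeometric series lies
in `[0, 3/4]`, inside the disc of convergence. With `‖K₁‖ ≤ C` the integral is at most
`C φ^{a+1} / (a + 1)`, and `φ(t) = eᵗ - 1 ≤ 2t` for `t ≤ 1`.
-/

open Filter Topology

noncomputable def hypCoeff (a b c : ℂ) (n : ℕ) : ℂ :=
  ∏ k ∈ Finset.range n, ((a + k) * (b + k) / ((c + k) * (k + 1)))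

theorem hypC_eq_tsum (a b c z : ℂ) : hypC a b c z = ∑' n, hypCoeff a b c n * z ^ n := rfl

theorem tendsto_add_natCast_div_add_one (x : ℂ) :
    Tendsto (fun n : ℕ => (x + n) / (n + 1)) atTop (𝓝 1) := by
  have h := (tendsto_add_atTop_iff_nat 1).2 (tendsto_const_div_atTop_nhds_zero_nat (x - 1))
  convert h.const_add 1 using 2 with n
  · push_cast
    field_simp
    ring
  · simp

theorem tendsto_hypCoeff_ratio (a b c : ℂ) :
    Tendsto (fun n : ℕ => (a + n) * (b + n) / ((c + n) * (n + 1))) atTop (𝓝 1) := by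
  have h := ((tendsto_add_natCast_div_add_one a).mul (tendsto_add_natCast_div_add_one b)).div
    (tendsto_add_natCast_div_add_one c) one_ne_zero
  convert h using 2 with n
  · simp only [Pi.div_apply]
    have : (n : ℂ) + 1 ≠ 0 := by exact_mod_cast n.succ_ne_zero
    rw [div_mul_div_comm, div_div_div_eq,
      show ((n : ℂ) + 1) * (n + 1) * (c + n) = (c + n) * (n + 1) * (n + 1) by ring,
      mul_div_mul_right _ _ this]
  · simp

theorem summable_norm_hypCoeff_mul_pow (a b c : ℂ) {r : ℝ} (hr0 : 0 ≤ r) (hr : r < 1) :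
    Summable fun n => ‖hypCoeff a b c n‖ * r ^ n := by
  obtain ⟨ρ, hrρ, hρ⟩ := exists_between hr
  have hlim : Tendsto (fun n : ℕ => ‖(a + n) * (b + n) / ((c + n) * (n + 1))‖ * r) atTop
      (𝓝 r) := by
    simpa using (tendsto_hypCoeff_ratio a b c).norm.mul_const r
  refine summable_of_ratio_norm_eventually_le hρ ?_
  filter_upwards [hlim.eventually_le_const hrρ] with n hn
  rw [Real.norm_of_nonneg (by positivity), Real.norm_of_nonneg (by positivity), hypCoeff,
    Finset.prod_range_succ, ← hypCoeff, norm_mul, pow_succ]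
  calc ‖hypCoeff a b c n‖ * ‖(a + n) * (b + n) / ((c + n) * (n + 1))‖ * (r ^ n * r)
      = ‖(a + n) * (b + n) / ((c + n) * (n + 1))‖ * r * (‖hypCoeff a b c n‖ * r ^ n) := by ring
    _ ≤ ρ * (‖hypCoeff a b c n‖ * r ^ n) := by gcongr

theorem exists_norm_hypC_le (a b c : ℂ) {r : ℝ} (hr0 : 0 ≤ r) (hr : r < 1) :
    ∃ B, ∀ z : ℂ, ‖z‖ ≤ r → ‖hypC a b c z‖ ≤ B := by
  have hs := summable_norm_hypCoeff_mul_pow a b c hr0 hr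
  refine ⟨∑' n, ‖hypCoeff a b c n‖ * r ^ n, fun z hz => ?_⟩
  have hle : ∀ n, ‖hypCoeff a b c n * z ^ n‖ ≤ ‖hypCoeff a b c n‖ * r ^ n := fun n => by
    rw [norm_mul, norm_pow]
    gcongr
  have hs' := (hs.of_norm_bounded hle).norm
  rw [hypC_eq_tsum]
  exact (norm_tsum_le_tsum_norm hs').trans (hs'.tsum_le_tsum hle hs)

theorem rpow_le_rpow_abs {x y : ℝ} (p : ℝ) (hx : 1 ≤ x) (hxy : x ≤ y) : x ^ p ≤ y ^ |p| :=
  (rpow_le_rpow_of_exponent_le hx (le_abs_self p)).trans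
    (rpow_le_rpow (by linarith) hxy (abs_nonneg p))

theorem four_le_exp_add_one_sq_sub_sq {t z : ℝ} (hz0 : 0 ≤ z) (hz : z ≤ exp t - 1) :
    4 ≤ (exp t + 1) ^ 2 - z ^ 2 := by
  nlinarith

theorem exp_add_one_sq_sub_sq_le {t : ℝ} (z : ℝ) (ht1 : t ≤ 1) :
    (exp t + 1) ^ 2 - z ^ 2 ≤ (exp 1 + 1) ^ 2 := by
  nlinarith [exp_le_exp.2 ht1, exp_pos t]

theorem abs_kernel_argument_le {t z : ℝ} (ht1 : t ≤ 1) (hz0 : 0 ≤ z) (hz : z ≤ exp t - 1) :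
    |((exp t - 1) ^ 2 - z ^ 2) / ((exp t + 1) ^ 2 - z ^ 2)| ≤ 3 / 4 := by
  have hX := four_le_exp_add_one_sq_sub_sq hz0 hz
  have hnum : (exp t - 1) ^ 2 - z ^ 2 ≤ 3 := by
    nlinarith [exp_le_exp.2 ht1, exp_one_lt_d9]
  rw [abs_of_nonneg (div_nonneg (by nlinarith) (by linarith)), div_le_iff₀ (by linarith)]
  linarith

theorem exists_norm_K₁_le (M : ℂ) :
    ∃ C, ∀ t z : ℝ, 0 ≤ t → t ≤ 1 → 0 ≤ z → z ≤ exp t - 1 → ‖K₁ z t M‖ ≤ C := by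
  obtain ⟨B, hB⟩ := exists_norm_hypC_le (1/2 - M) (1/2 - M) 1 (r := 3/4) (by norm_num)
    (by norm_num)
  refine ⟨‖(4 : ℂ) ^ (-M)‖ * exp |M.re| * ((exp 1 + 1) ^ 2) ^ |M.re - 1/2| * B,
    fun t z ht0 ht1 hz0 hz => ?_⟩
  have hX := four_le_exp_add_one_sq_sub_sq hz0 hz
  have hexp : ‖Complex.exp (-M * t)‖ ≤ exp |M.re| := by
    rw [Complex.norm_exp, exp_le_exp]
    simp only [Complex.mul_re, Complex.neg_re, Complex.ofReal_re, Complex.neg_im,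
      Complex.ofReal_im, mul_zero, sub_zero]
    nlinarith [neg_abs_le M.re, abs_nonneg M.re]
  have hpow : ‖(((exp t + 1) ^ 2 - z ^ 2 : ℝ) : ℂ) ^ (-(1/2 : ℂ) + M)‖ ≤
      ((exp 1 + 1) ^ 2) ^ |M.re - 1/2| := by
    rw [Complex.norm_cpow_eq_rpow_re_of_pos (by linarith)]
    convert rpow_le_rpow_abs _ (by linarith) (exp_add_one_sq_sub_sq_le z ht1) using 3
    simp only [Complex.add_re, Complex.neg_re, Complex.div_ofNat_re, Complex.one_re]
    ring
  have hhyp := hB _ (by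
    rw [Complex.norm_real, norm_eq_abs]
    exact abs_kernel_argument_le ht1 hz0 hz)
  rw [K₁, norm_mul, norm_mul, norm_mul]
  gcongr

open MeasureTheory Set in
/-- No integrability of `f` is needed: a non-integrable integrand has integral `0`. -/
theorem integral_rpow_mul_mul_le {f : ℝ → ℝ} {a φ C : ℝ} (ha : -1 < a) (hφ : 0 ≤ φ)
    (hf : ∀ s ∈ Ioc (0 : ℝ) 1, 0 ≤ f s ∧ f s ≤ C) :
    ∫ s in (0 : ℝ)..1, (φ * s) ^ a * f s * φ ≤ C * φ ^ (a + 1) / (a + 1) := by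
  have ha1 : a + 1 ≠ 0 := by linarith
  have hg : IntegrableOn (fun s => C * φ ^ (a + 1) * s ^ a) (Ioc 0 1) :=
    ((intervalIntegral.intervalIntegrable_rpow' ha).const_mul _).1
  rw [intervalIntegral.integral_of_le zero_le_one]
  calc ∫ s in Ioc 0 1, (φ * s) ^ a * f s * φ
      ≤ ∫ s in Ioc 0 1, C * φ ^ (a + 1) * s ^ a := by
        refine integral_mono_of_nonneg (ae_restrict_of_forall_mem measurableSet_Ioc
          fun s hs => ?_) hg (ae_restrict_of_forall_mem measurableSet_Ioc fun s hs => ?_)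
        · exact mul_nonneg (mul_nonneg (rpow_nonneg (mul_nonneg hφ hs.1.le) a) (hf s hs).1) hφ
        · have hφs : 0 ≤ φ ^ a * s ^ a * φ :=
            mul_nonneg (mul_nonneg (rpow_nonneg hφ a) (rpow_nonneg hs.1.le a)) hφ
          calc (φ * s) ^ a * f s * φ = φ ^ a * s ^ a * φ * f s := by
                rw [mul_rpow hφ hs.1.le]
                ring
            _ ≤ φ ^ a * s ^ a * φ * C := by gcongr; exact (hf s hs).2
            _ = C * φ ^ (a + 1) * s ^ a := by
                rw [rpow_add_one' hφ ha1]
                ring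
    _ = C * φ ^ (a + 1) / (a + 1) := by
        rw [integral_const_mul, ← intervalIntegral.integral_of_le zero_le_one,
          integral_rpow (Or.inl ha), one_rpow, zero_rpow ha1, sub_zero]
        ring

theorem stmt17_general (M : ℂ) (a : ℝ) (ha : a > -1) :
    ∃ C : ℝ, ∀ t : ℝ, 0 < t → t < 1 →
      (∫ s in (0:ℝ)..1, ((Real.exp t - 1) * s) ^ a *
          ‖K₁ ((Real.exp t - 1) * s) t M‖ * (Real.exp t - 1)) ≤
        C * t ^ (a + 1) := by
  obtain ⟨C, hC⟩ := exists_norm_K₁_le M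
  have hC0 : 0 ≤ C := (norm_nonneg _).trans (hC 0 0 le_rfl zero_le_one le_rfl (by simp))
  have ha1 : 0 < a + 1 := by linarith
  refine ⟨C * 2 ^ (a + 1) / (a + 1), fun t ht ht1 => ?_⟩
  have hφ0 : 0 ≤ exp t - 1 := by linarith [add_one_le_exp t]
  have hφ : exp t - 1 ≤ 2 * t := by
    have := abs_exp_sub_one_le (x := t) (by rw [abs_of_pos ht]; exact ht1.le)
    rwa [abs_of_pos ht, abs_of_nonneg hφ0] at this
  calc _ ≤ C * (exp t - 1) ^ (a + 1) / (a + 1) :=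
        integral_rpow_mul_mul_le ha hφ0 fun s hs => ⟨norm_nonneg _,
          hC t _ ht.le ht1.le (mul_nonneg hφ0 hs.1.le) (mul_le_of_le_one_right hφ0 hs.2)⟩
    _ ≤ C * (2 * t) ^ (a + 1) / (a + 1) := by gcongr
    _ = C * 2 ^ (a + 1) / (a + 1) * t ^ (a + 1) := by
        rw [mul_rpow zero_le_two ht.le]
        ring

theorem stmt17 (M : ℂ) (hM : 0 < M.re) (a : ℝ) (ha : a > -1) :
    ∃ C : ℝ, ∀ t : ℝ, 0 < t → t < 1 →
      (∫ s in (0:ℝ)..1, ((Real.exp t - 1) * s) ^ a *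
          ‖K₁ ((Real.exp t - 1) * s) t M‖ * (Real.exp t - 1)) ≤
        C * t ^ (a + 1) :=
  stmt17_general M a ha
end

section
/- Let ℳ ≥ 0, N ∈ ℝ, z > 1, and set g(b) = |Z|²(b), where |Z|² is (Re Z)² + (Im Z)² viewed as a function of b = y², with Z as in the kernel estimate. Then (d/db) g evaluated at b = 0 equals −(z+1)^{−6} · 8(z−1)(z²(24ℳ² + 4ℳ + 24N²) + z(20ℳ² + 20ℳ + 20N² + 1) + (4ℳ² + 8ℳ + 4N² + 3)), which is negative for all z > 1, since the bracket is positive for z > 1. -/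
theorem stmt19 (ℳ N z : ℝ) (hℳ : 0 ≤ ℳ) (hz : 1 < z)
    (g : ℝ → ℝ)
    (hg : ∀ b : ℝ, g b =
      ((6 * ℳ * (b - z ^ 2) + 4 * ℳ * z + 2 * ℳ + b - (z + 1) ^ 2 + 4) /
          ((z + 1) ^ 2 - b)) ^ 2 +
      ((6 * N * (b - z ^ 2) + 4 * N * z + 2 * N) / ((z + 1) ^ 2 - b)) ^ 2) :
    deriv g 0 =
      -(8 * (z - 1) * (z ^ 2 * (24 * ℳ ^ 2 + 4 * ℳ + 24 * N ^ 2) +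
          z * (20 * ℳ ^ 2 + 20 * ℳ + 20 * N ^ 2 + 1) +
          (4 * ℳ ^ 2 + 8 * ℳ + 4 * N ^ 2 + 3))) / (z + 1) ^ 6 ∧
    deriv g 0 < 0 := by
  have hzpos : (0:ℝ) < z + 1 := by linarith
  have hD0 : ((z + 1) ^ 2 - (0:ℝ)) ≠ 0 := by nlinarith
  have hgeq : g = fun b : ℝ =>
      ((6 * ℳ * (b - z ^ 2) + 4 * ℳ * z + 2 * ℳ + b - (z + 1) ^ 2 + 4) /
          ((z + 1) ^ 2 - b)) ^ 2 +
      ((6 * N * (b - z ^ 2) + 4 * N * z + 2 * N) / ((z + 1) ^ 2 - b)) ^ 2 :=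
    funext hg
  have hf1 : HasDerivAt (fun b : ℝ =>
      6 * ℳ * (b - z ^ 2) + 4 * ℳ * z + 2 * ℳ + b - (z + 1) ^ 2 + 4)
      (6 * ℳ * 1 + 1) 0 := by
    have h := (((((hasDerivAt_id (0:ℝ)).sub_const (z ^ 2)).const_mul
      (6 * ℳ)).add_const (4 * ℳ * z)).add_const (2 * ℳ)).add (hasDerivAt_id 0)
    exact (h.sub_const ((z + 1) ^ 2)).add_const 4
  have hf2 : HasDerivAt (fun b : ℝ =>
      6 * N * (b - z ^ 2) + 4 * N * z + 2 * N) (6 * N * 1) 0 := by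
    exact ((((hasDerivAt_id (0:ℝ)).sub_const (z ^ 2)).const_mul
      (6 * N)).add_const (4 * N * z)).add_const (2 * N)
  have hD : HasDerivAt (fun b : ℝ => (z + 1) ^ 2 - b) (-1) 0 := by
    simpa using (hasDerivAt_id (0:ℝ)).const_sub ((z + 1) ^ 2)
  have hq1 := hf1.div hD hD0
  have hq2 := hf2.div hD hD0
  have hG := (hq1.pow 2).add (hq2.pow 2)
  have key : deriv (fun b : ℝ =>
      ((6 * ℳ * (b - z ^ 2) + 4 * ℳ * z + 2 * ℳ + b - (z + 1) ^ 2 + 4) /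
          ((z + 1) ^ 2 - b)) ^ 2 +
      ((6 * N * (b - z ^ 2) + 4 * N * z + 2 * N) / ((z + 1) ^ 2 - b)) ^ 2) 0 =
      -(8 * (z - 1) * (z ^ 2 * (24 * ℳ ^ 2 + 4 * ℳ + 24 * N ^ 2) +
          z * (20 * ℳ ^ 2 + 20 * ℳ + 20 * N ^ 2 + 1) +
          (4 * ℳ ^ 2 + 8 * ℳ + 4 * N ^ 2 + 3))) / (z + 1) ^ 6 := by
    erw [hG.deriv]
    simp only [Pi.div_apply]
    have h1 : (z + 1) ≠ 0 := ne_of_gt hzpos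
    push_cast
    field_simp
    ring
  rw [hgeq, key]
  refine ⟨rfl, ?_⟩
  have hb1 : (0:ℝ) ≤ z ^ 2 * (24 * ℳ ^ 2 + 4 * ℳ + 24 * N ^ 2) := by positivity
  have hb2 : (0:ℝ) ≤ 20 * ℳ ^ 2 + 20 * ℳ + 20 * N ^ 2 := by positivity
  have hb3 : (0:ℝ) ≤ 4 * ℳ ^ 2 + 8 * ℳ + 4 * N ^ 2 := by positivity
  have hbr : (0:ℝ) < z ^ 2 * (24 * ℳ ^ 2 + 4 * ℳ + 24 * N ^ 2) +
        z * (20 * ℳ ^ 2 + 20 * ℳ + 20 * N ^ 2 + 1) +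
        (4 * ℳ ^ 2 + 8 * ℳ + 4 * N ^ 2 + 3) := by nlinarith [mul_nonneg (le_of_lt (lt_trans one_pos hz)) hb2]
  have hnum : 0 < 8 * (z - 1) * (z ^ 2 * (24 * ℳ ^ 2 + 4 * ℳ + 24 * N ^ 2) +
        z * (20 * ℳ ^ 2 + 20 * ℳ + 20 * N ^ 2 + 1) +
        (4 * ℳ ^ 2 + 8 * ℳ + 4 * N ^ 2 + 3)) :=
    mul_pos (by linarith) hbr
  have hden : (0:ℝ) < (z + 1) ^ 6 := by positivity
  exact div_neg_of_neg_of_pos (by linarith) hden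
end
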